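/- Let G be a group generated by a finite symmetric set with word length ℓ and H ≤ G a subgroup, and suppose that the quasi-regular representation is weakly contained in the regular one, in the sense that ‖λ_{G/H}(f)‖ ≤ ‖f‖_* for every finitely supported f : G → ℂ. Then ‖f‖_* = ‖f‖_h for every finitely supported f : G → ℝ with nonnegative values; and if moreover G has the rapid decay property, then the pair (G,H) has the rapid decay property. -/

import Mathlib

open scoped BigOperators

attribute [local instance] Classical.propDecidable

section Defs

variable {G : Type*} [Group G]

/-- Word length with respect to a generating set `S`. -/
noncomputable def wordLength (S : Set G) (x : G) : ℕ :=
  sInf {n | ∃ l : List G, (∀ s ∈ l, s ∈ S) ∧ l.length = n ∧ l.prod = x}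

/-- Convolution of finitely supported functions:
`(f * ϕ) x = ∑ z, f z * ϕ (z⁻¹ * x)`. -/
noncomputable def conv {k : Type*} [Semiring k] (f ϕ : G →₀ k) : G →₀ k :=
  f.sum fun z c => c • Finsupp.mapDomain (fun x => z * x) ϕ

/-- `n`-fold convolution power. -/
noncomputable def convPow {k : Type*} [Semiring k] (f : G →₀ k) : ℕ → G →₀ k
  | 0 => Finsupp.single 1 1
  | n + 1 => conv f (convPow f n)

/-- ℓ² norm of a finitely supported function. -/
noncomputable def l2Norm {α k : Type*} [NormedAddCommGroup k] (f : α →₀ k) : ℝ :=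
  Real.sqrt (∑ x ∈ f.support, ‖f x‖ ^ 2)

/-- ℓ¹ norm of a finitely supported function. -/
noncomputable def l1Norm {α k : Type*} [NormedAddCommGroup k] (f : α →₀ k) : ℝ :=
  ∑ x ∈ f.support, ‖f x‖

/-- The hybrid `(2,1)` norm with respect to the subgroup `H`:
`‖f‖_{(2,1)} = sqrt (∑_{gH ∈ G/H} (∑_{x ∈ gH} |f x|)²)`. -/
noncomputable def l21Norm (H : Subgroup G) {k : Type*} [NormedAddCommGroup k]
    (f : G →₀ k) : ℝ :=
  l2Norm (Finsupp.mapDomain (QuotientGroup.mk : G → G ⧸ H) (f.mapRange norm norm_zero))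

/-- Hybrid operator norm `‖f‖_h`. -/
noncomputable def hybridOpNorm (H : Subgroup G) (f : G →₀ ℂ) : ℝ :=
  sSup {c : ℝ | ∃ ϕ : G →₀ ℂ, l21Norm H ϕ ≤ 1 ∧ c = l21Norm H (conv f ϕ)}

/-- Regular operator norm `‖f‖_*`. -/
noncomputable def regOpNorm (f : G →₀ ℂ) : ℝ :=
  sSup {c : ℝ | ∃ ξ : G →₀ ℂ, l2Norm ξ ≤ 1 ∧ c = l2Norm (conv f ξ)}

/-- The quasi-regular representation:
`(λ_{G/H}(f) ξ)(gH) = ∑ z, f z * ξ (z⁻¹ g H)`. -/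
noncomputable def quasiReg (H : Subgroup G) (f : G →₀ ℂ) (ξ : (G ⧸ H) →₀ ℂ) :
    (G ⧸ H) →₀ ℂ :=
  f.sum fun z c => c • Finsupp.mapDomain (fun q => z • q) ξ

/-- Quasi-regular operator norm `‖λ_{G/H}(f)‖`. -/
noncomputable def quasiRegOpNorm (H : Subgroup G) (f : G →₀ ℂ) : ℝ :=
  sSup {c : ℝ | ∃ ξ : (G ⧸ H) →₀ ℂ, l2Norm ξ ≤ 1 ∧ c = l2Norm (quasiReg H f ξ)}

/-- Embed a real finitely supported function into the complex valued ones. -/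
noncomputable def toC {α : Type*} (f : α →₀ ℝ) : α →₀ ℂ :=
  f.mapRange Complex.ofReal Complex.ofReal_zero

/-- Pointwise weight of a function by `(1 + ℓ)^s`. -/
noncomputable def weight (S : Set G) (s : ℝ) (f : G →₀ ℂ) : G →₀ ℂ where
  support := f.support
  toFun x := ((((1 : ℝ) + (wordLength S x : ℝ)) ^ s : ℝ) : ℂ) * f x
  mem_support_toFun x := by
    simp only [Finsupp.mem_support_iff]
    have hpos : (0 : ℝ) < ((1 : ℝ) + (wordLength S x : ℝ)) ^ s :=
      Real.rpow_pos_of_pos (by positivity) s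
    constructor
    · intro hf h
      rcases mul_eq_zero.mp h with h1 | h2
      · exact hpos.ne' (by exact_mod_cast h1)
      · exact hf h2
    · intro h hf
      exact h (by rw [hf, mul_zero])

/-- The involution `f⋆ x = f x⁻¹`. -/
noncomputable def starFun {k : Type*} [Zero k] (f : G →₀ k) : G →₀ k :=
  Finsupp.equivMapDomain (Equiv.inv G) f

/-- Sum of the values of `g` over the subgroup `H`. -/
noncomputable def sumOverSubgroup (H : Subgroup G) (g : G →₀ ℝ) : ℝ :=
  ∑ x ∈ g.support.filter (fun x => x ∈ H), g x

/-- `f` is supported in the ball of radius `R` for the word length of `S`. -/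
def supportedInBall (S : Set G) (R : ℕ) {k : Type*} [Zero k] (f : G →₀ k) : Prop :=
  ∀ x ∈ f.support, wordLength S x ≤ R

/-- Rapid decay property for the pair `(G, H)`. -/
def PairRD (S : Set G) (H : Subgroup G) : Prop :=
  ∃ C : ℝ, ∃ D : ℕ, 0 ≤ C ∧ ∀ (R : ℕ) (f ϕ : G →₀ ℂ), supportedInBall S R f →
    l21Norm H (conv f ϕ) ≤ C * ((R : ℝ) + 1) ^ D * l21Norm H f * l21Norm H ϕ

/-- Rapid decay property for the group `G`. -/
def GroupRD (S : Set G) : Prop :=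
  ∃ C : ℝ, ∃ D : ℕ, 0 ≤ C ∧ ∀ (R : ℕ) (f ϕ : G →₀ ℂ), supportedInBall S R f →
    l2Norm (conv f ϕ) ≤ C * ((R : ℝ) + 1) ^ D * l2Norm f * l2Norm ϕ

/-- Polynomial growth of a subgroup for the induced length. -/
def polyGrowthSubgroup (S : Set G) (H : Subgroup G) : Prop :=
  ∃ C : ℝ, ∃ D : ℕ, 0 ≤ C ∧ ∀ R : ℕ,
    (Set.ncard {x : G | x ∈ H ∧ wordLength S x ≤ R} : ℝ) ≤ C * ((R : ℝ) + 1) ^ D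

/-- Polynomial growth of the coset space `G/H`. -/
def polyGrowthQuotient (S : Set G) (H : Subgroup G) : Prop :=
  ∃ C : ℝ, ∃ D : ℕ, 0 ≤ C ∧ ∀ R : ℕ,
    (Set.ncard ((QuotientGroup.mk : G → G ⧸ H) '' {x : G | wordLength S x ≤ R}) : ℝ) ≤
      C * ((R : ℝ) + 1) ^ D

/-- Co-amenability of `H` in `G`: Følner condition for the left action on `G/H`. -/
def Coamenable (H : Subgroup G) : Prop :=
  ∀ ε : ℝ, 0 < ε → ∀ F : Finset G, ∃ V : Finset (G ⧸ H), V.Nonempty ∧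
    ((symmDiff (Finset.image₂ (· • ·) F V) V).card : ℝ) ≤ ε * (V.card : ℝ)

/-- Matrix coefficient `⟨λ_{G/H}(γ) ξ, η⟩` of the quasi-regular representation
on `ℓ²(G/H)`. -/
noncomputable def qrCoeff (H : Subgroup G) (γ : G)
    (ξ η : lp (fun _ : G ⧸ H => ℂ) 2) : ℂ :=
  ∑' q : G ⧸ H, ξ (γ⁻¹ • q) * (starRingEnd ℂ) (η q)

/-- The spectral radius of the random walk induced on `G/H`:
`ρ = limsup P_{2n}(H,H)^{1/(2n)}`. -/
noncomputable def specRadQuot (H : Subgroup G) (μ : G →₀ ℝ) : ℝ :=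
  Filter.limsup (fun n : ℕ =>
    (sumOverSubgroup H (convPow μ (2 * n))) ^ ((1 : ℝ) / (2 * (n : ℝ)))) Filter.atTop

end Defs

/-!
For `f ≥ 0` the regular, quasi-regular and hybrid operator norms satisfy
`‖f‖_* ≤ ‖λ_{G/H}(f)‖ ≤ ‖f‖_h ≤ ‖λ_{G/H}(f)‖`, so weak containment forces equality.
The first inequality is Minkowski's inequality on each coset: the restriction of `f * ξ` to `gH`
has `ℓ²` norm at most `λ_{G/H}(f) ξ̃ (gH)`, where `ξ̃(gH)` is the `ℓ²` norm of `ξ` on `gH`, and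
`‖ξ̃‖₂ = ‖ξ‖₂`. The second lifts `η ∈ ℓ²(G/H)` along coset representatives, which turns the `ℓ²`
norm into the `(2,1)` norm. The third holds for every `f` with `|f|` in place of `f`: summing
`|f * ϕ| ≤ |f| * |ϕ|` over cosets turns convolution into `λ_{G/H}(|f|)` applied to the coset sums
of `|ϕ|`, whose `ℓ²` norm is `‖ϕ‖_{(2,1)}`. Together with `‖f‖₂ ≤ ‖f‖_{(2,1)}`, this estimate
transfers rapid decay from `G` to the pair `(G,H)`.
-/

open Finset ComplexOrder

section L2

variable {α β ι k : Type*} [NormedAddCommGroup k]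

lemma l2Norm_nonneg (g : α →₀ k) : 0 ≤ l2Norm g := Real.sqrt_nonneg _

lemma sq_l2Norm (g : α →₀ k) : l2Norm g ^ 2 = ∑ x ∈ g.support, ‖g x‖ ^ 2 :=
  Real.sq_sqrt (sum_nonneg fun _ _ => sq_nonneg _)

lemma l2Norm_eq_sqrt_sum {g : α →₀ k} {s : Finset α} (hs : g.support ⊆ s) :
    l2Norm g = √(∑ x ∈ s, ‖g x‖ ^ 2) := by
  rw [l2Norm, sum_subset hs]
  intro x _ hx
  simp [Finsupp.notMem_support_iff.mp hx]

lemma l2Norm_le_of_norm_le {k' : Type*} [NormedAddCommGroup k'] {g : α →₀ k} {h : α →₀ k'}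
    (hgh : ∀ x, ‖g x‖ ≤ ‖h x‖) : l2Norm g ≤ l2Norm h := by
  rw [l2Norm_eq_sqrt_sum (subset_union_left (s₂ := h.support)),
    l2Norm_eq_sqrt_sum (subset_union_right (s₁ := g.support))]
  gcongr with x
  exact hgh x

lemma l2Norm_congr_norm {k' : Type*} [NormedAddCommGroup k'] {g : α →₀ k} {h : α →₀ k'}
    (hgh : ∀ x, ‖g x‖ = ‖h x‖) : l2Norm g = l2Norm h :=
  (l2Norm_le_of_norm_le fun x => (hgh x).le).antisymm (l2Norm_le_of_norm_le fun x => (hgh x).ge)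

lemma l1Norm_nonneg (g : α →₀ k) : 0 ≤ l1Norm g := sum_nonneg fun _ _ => norm_nonneg _

lemma l2Norm_le_l1Norm (g : α →₀ k) : l2Norm g ≤ l1Norm g :=
  Real.sqrt_le_iff.mpr ⟨sum_nonneg fun _ _ => norm_nonneg _,
    sum_sq_le_sq_sum_of_nonneg fun _ _ => norm_nonneg _⟩

lemma sum_sq_norm_le_sq_l2Norm (s : Finset α) (g : α →₀ k) :
    ∑ x ∈ s, ‖g x‖ ^ 2 ≤ l2Norm g ^ 2 := by
  calc ∑ x ∈ s, ‖g x‖ ^ 2 ≤ ∑ x ∈ s ∪ g.support, ‖g x‖ ^ 2 :=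
        sum_le_sum_of_subset_of_nonneg subset_union_left fun _ _ _ => sq_nonneg _
    _ = l2Norm g ^ 2 := by
        rw [l2Norm_eq_sqrt_sum subset_union_right,
          Real.sq_sqrt (sum_nonneg fun _ _ => sq_nonneg _)]

lemma l2Norm_eq_norm_toLp {g : α →₀ k} {s : Finset α} (hs : g.support ⊆ s) :
    l2Norm g = ‖WithLp.toLp 2 (fun x : s => g x)‖ := by
  rw [PiLp.norm_eq_of_L2, l2Norm_eq_sqrt_sum hs, ← sum_coe_sort s]

lemma l2Norm_sum_le (t : Finset ι) (g : ι → α →₀ k) :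
    l2Norm (∑ i ∈ t, g i) ≤ ∑ i ∈ t, l2Norm (g i) := by
  set s := t.biUnion fun i => (g i).support
  have hs : ∀ i ∈ t, (g i).support ⊆ s := fun i hi =>
    subset_biUnion_of_mem (fun j => (g j).support) hi
  rw [l2Norm_eq_norm_toLp Finsupp.support_finsetSum]
  calc ‖WithLp.toLp 2 (fun x : s => (∑ i ∈ t, g i) x)‖
      = ‖∑ i ∈ t, WithLp.toLp 2 (fun x : s => g i x)‖ := by
        congr 1
        ext x
        simp
    _ ≤ ∑ i ∈ t, l2Norm (g i) := by
        refine (norm_sum_le _ _).trans (sum_le_sum fun i hi => ?_)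
        rw [l2Norm_eq_norm_toLp (hs i hi)]

lemma l2Norm_smul {𝕜 : Type*} [NormedField 𝕜] [NormedSpace 𝕜 k] (c : 𝕜) (g : α →₀ k) :
    l2Norm (c • g) = ‖c‖ * l2Norm g := by
  rw [l2Norm_eq_sqrt_sum (Finsupp.support_smul (b := c) (g := g)), l2Norm,
    ← Real.sqrt_sq (norm_nonneg c), ← Real.sqrt_mul (sq_nonneg _), mul_sum]
  simp only [Finsupp.smul_apply, norm_smul, mul_pow]

lemma l2Norm_mapDomain_of_injective {π : α → β} (hπ : Function.Injective π) (g : α →₀ k) :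
    l2Norm (Finsupp.mapDomain π g) = l2Norm g := by
  rw [l2Norm_eq_sqrt_sum Finsupp.mapDomain_support, sum_image fun x _ y _ h => hπ h, l2Norm]
  simp only [Finsupp.mapDomain_apply hπ]

lemma mapDomain_apply_eq_sum_filter [DecidableEq β] {M : Type*} [AddCommMonoid M] (π : α → β)
    (g : α →₀ M) (y : β) : Finsupp.mapDomain π g y = ∑ x ∈ g.support with π x = y, g x := by
  simp [Finsupp.mapDomain, Finsupp.sum, Finsupp.single_apply, sum_filter]

lemma sq_l2Norm_eq_sum_fiber [DecidableEq β] (π : α → β) (g : α →₀ k) :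
    l2Norm g ^ 2 = ∑ q ∈ g.support.image π, l2Norm (g.filter (π · = q)) ^ 2 := by
  rw [sq_l2Norm, ← sum_fiberwise_of_maps_to fun x hx => mem_image_of_mem π hx]
  refine sum_congr rfl fun q _ => ?_
  rw [sq_l2Norm, Finsupp.support_filter]
  exact sum_congr rfl fun x hx => by
    rw [Finsupp.filter_apply_pos (π · = q) g (mem_filter.mp hx).2]

lemma l2Norm_le_of_fiber_le [DecidableEq β] {k' : Type*} [NormedAddCommGroup k'] (π : α → β)
    {g : α →₀ k} {w : β →₀ k'} (h : ∀ q, l2Norm (g.filter (π · = q)) ≤ ‖w q‖) :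
    l2Norm g ≤ l2Norm w := by
  refine le_of_pow_le_pow_left₀ two_ne_zero (l2Norm_nonneg w) ?_
  rw [sq_l2Norm_eq_sum_fiber π]
  refine (sum_le_sum fun q _ => ?_).trans (sum_sq_norm_le_sq_l2Norm _ w)
  exact pow_le_pow_left₀ (l2Norm_nonneg _) (h q) 2

lemma l1Norm_filter (g : α →₀ k) (p : α → Prop) [DecidablePred p] :
    l1Norm (g.filter p) = ∑ x ∈ g.support with p x, ‖g x‖ := by
  rw [l1Norm, Finsupp.support_filter]
  exact sum_congr rfl fun x hx => by rw [Finsupp.filter_apply_pos p g (mem_filter.mp hx).2]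

lemma norm_mapDomain_apply_le [DecidableEq β] (π : α → β) (g : α →₀ k) (y : β) :
    ‖Finsupp.mapDomain π g y‖ ≤ l1Norm (g.filter (π · = y)) := by
  rw [mapDomain_apply_eq_sum_filter, l1Norm_filter]
  exact norm_sum_le _ _

lemma support_mapRange_norm (g : α →₀ k) : (g.mapRange norm norm_zero).support = g.support := by
  ext x
  simp

lemma mapDomain_mapRange_norm_apply [DecidableEq β] (π : α → β) (g : α →₀ k) (y : β) :
    Finsupp.mapDomain π (g.mapRange norm norm_zero) y = l1Norm (g.filter (π · = y)) := by
  rw [mapDomain_apply_eq_sum_filter, l1Norm_filter, support_mapRange_norm]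
  rfl

end L2

section Abs

variable {α β : Type*}

noncomputable def absC (g : α →₀ ℂ) : α →₀ ℂ := toC (g.mapRange norm norm_zero)

@[simp] lemma absC_apply (g : α →₀ ℂ) (x : α) : absC g x = (‖g x‖ : ℂ) := rfl

lemma support_absC (g : α →₀ ℂ) : (absC g).support = g.support := by
  ext x
  simp

lemma absC_nonneg (g : α →₀ ℂ) : 0 ≤ absC g := fun x => by
  simp

lemma absC_eq_self {g : α →₀ ℂ} (hg : 0 ≤ g) : absC g = g := by
  ext x
  exact Complex.norm_of_nonneg' (hg x)

lemma toC_nonneg {f : α →₀ ℝ} (hf : ∀ x, 0 ≤ f x) : 0 ≤ toC f := fun x => by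
  simpa [toC] using Complex.zero_le_real.mpr (hf x)

lemma l2Norm_toC (f : α →₀ ℝ) : l2Norm (toC f) = l2Norm f :=
  l2Norm_congr_norm fun x => by simp [toC]

lemma l1Norm_absC (g : α →₀ ℂ) : l1Norm (absC g) = l1Norm g := by
  simp [l1Norm, support_absC]

lemma l2Norm_absC (g : α →₀ ℂ) : l2Norm (absC g) = l2Norm g :=
  l2Norm_congr_norm fun x => by simp

lemma l2Norm_le_of_nonneg_of_le {u v : α →₀ ℂ} (hu : 0 ≤ u) (huv : u ≤ v) :
    l2Norm u ≤ l2Norm v :=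
  l2Norm_le_of_norm_le fun x => CStarAlgebra.norm_le_norm_of_nonneg_of_le (hu x) (huv x)

lemma mapDomain_toC (π : α → β) (f : α →₀ ℝ) :
    Finsupp.mapDomain π (toC f) = toC (Finsupp.mapDomain π f) :=
  Finsupp.mapDomain_mapRange _ _ _ _ fun x y => Complex.ofReal_add x y

lemma norm_sum_of_nonneg {ι : Type*} {s : Finset ι} {a : ι → ℂ} (ha : ∀ i ∈ s, 0 ≤ a i) :
    ‖∑ i ∈ s, a i‖ = ∑ i ∈ s, ‖a i‖ := by
  apply Complex.ofReal_injective
  push_cast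
  rw [Complex.norm_of_nonneg' (sum_nonneg ha)]
  exact sum_congr rfl fun i hi => (Complex.norm_of_nonneg' (ha i hi)).symm

end Abs

section Group

variable {G : Type*} [Group G] {H : Subgroup G}

local notation "π" => (QuotientGroup.mk : G → G ⧸ H)

lemma mapDomain_smul_apply {X M : Type*} [MulAction G X] [AddCommMonoid M] (z : G)
    (g : X →₀ M) (x : X) : Finsupp.mapDomain (z • ·) g x = g (z⁻¹ • x) := by
  simpa using Finsupp.mapDomain_apply (MulAction.injective z) g (z⁻¹ • x)

lemma mapDomain_mul_left_apply {M : Type*} [AddCommMonoid M] (z : G) (g : G →₀ M) (x : G) :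
    Finsupp.mapDomain (z * ·) g x = g (z⁻¹ * x) :=
  mapDomain_smul_apply z g x

lemma conv_apply (f ϕ : G →₀ ℂ) (x : G) :
    conv f ϕ x = ∑ z ∈ f.support, f z * ϕ (z⁻¹ * x) := by
  rw [conv, Finsupp.sum_apply]
  exact sum_congr rfl fun z _ => congrArg (f z * ·) (mapDomain_mul_left_apply z ϕ x)

lemma quasiReg_apply (f : G →₀ ℂ) (ξ : (G ⧸ H) →₀ ℂ) (q : G ⧸ H) :
    quasiReg H f ξ q = ∑ z ∈ f.support, f z * ξ (z⁻¹ • q) := by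
  rw [quasiReg, Finsupp.sum_apply]
  exact sum_congr rfl fun z _ => congrArg (f z * ·) (mapDomain_smul_apply z ξ q)

lemma conv_smul (f : G →₀ ℂ) (c : ℂ) (ϕ : G →₀ ℂ) : conv f (c • ϕ) = c • conv f ϕ := by
  simp only [conv, Finsupp.mapDomain_smul, Finsupp.smul_sum, smul_comm c]

lemma quasiReg_smul (f : G →₀ ℂ) (c : ℂ) (ξ : (G ⧸ H) →₀ ℂ) :
    quasiReg H f (c • ξ) = c • quasiReg H f ξ := by
  simp only [quasiReg, Finsupp.mapDomain_smul, Finsupp.smul_sum, smul_comm c]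

lemma mapDomain_conv (f ϕ : G →₀ ℂ) :
    Finsupp.mapDomain π (conv f ϕ) = quasiReg H f (Finsupp.mapDomain π ϕ) := by
  simp only [conv, quasiReg, Finsupp.sum, Finsupp.mapDomain_finsetSum, Finsupp.mapDomain_smul,
    ← Finsupp.mapDomain_comp]
  congr! 3

lemma l2Norm_quasiReg_le (f : G →₀ ℂ) (ξ : (G ⧸ H) →₀ ℂ) :
    l2Norm (quasiReg H f ξ) ≤ l1Norm f * l2Norm ξ := by
  refine (l2Norm_sum_le _ _).trans_eq ?_
  rw [l1Norm, sum_mul]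
  refine sum_congr rfl fun z _ => ?_
  rw [l2Norm_smul, l2Norm_mapDomain_of_injective (MulAction.injective z)]

lemma l21Norm_nonneg (g : G →₀ ℂ) : 0 ≤ l21Norm H g := l2Norm_nonneg _

lemma l21Norm_smul (c : ℂ) (ϕ : G →₀ ℂ) : l21Norm H (c • ϕ) = ‖c‖ * l21Norm H ϕ := by
  have h : (c • ϕ).mapRange norm norm_zero = ‖c‖ • ϕ.mapRange norm norm_zero := by
    ext x
    simp
  rw [l21Norm, l21Norm, h, Finsupp.mapDomain_smul, l2Norm_smul, norm_norm]

lemma l21Norm_eq_l2Norm_mapDomain_absC (g : G →₀ ℂ) :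
    l21Norm H g = l2Norm (Finsupp.mapDomain π (absC g)) := by
  rw [absC, mapDomain_toC, l2Norm_toC, l21Norm]

lemma l2Norm_mapDomain_le_l21Norm (g : G →₀ ℂ) :
    l2Norm (Finsupp.mapDomain π g) ≤ l21Norm H g := by
  refine l2Norm_le_of_norm_le fun q => ?_
  rw [mapDomain_mapRange_norm_apply, Real.norm_of_nonneg (l1Norm_nonneg _)]
  exact norm_mapDomain_apply_le _ _ _

lemma l2Norm_le_l21Norm (g : G →₀ ℂ) : l2Norm g ≤ l21Norm H g := by
  refine l2Norm_le_of_fiber_le π fun q => ?_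
  rw [mapDomain_mapRange_norm_apply, Real.norm_of_nonneg (l1Norm_nonneg _)]
  exact l2Norm_le_l1Norm _

lemma absC_conv_le (f ϕ : G →₀ ℂ) : absC (conv f ϕ) ≤ conv (absC f) (absC ϕ) := fun x => by
  rw [absC_apply, conv_apply, conv_apply, support_absC]
  simp only [absC_apply]
  exact_mod_cast (norm_sum_le _ _).trans_eq (sum_congr rfl fun z _ => norm_mul _ _)

lemma l21Norm_conv_le_l2Norm_quasiReg (f ϕ : G →₀ ℂ) :
    l21Norm H (conv f ϕ) ≤ l2Norm (quasiReg H (absC f) (Finsupp.mapDomain π (absC ϕ))) := by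
  rw [l21Norm_eq_l2Norm_mapDomain_absC, ← mapDomain_conv]
  exact l2Norm_le_of_nonneg_of_le (Finsupp.mapDomain_nonneg (absC_nonneg _))
    (Finsupp.mapDomain_mono (absC_conv_le f ϕ))

lemma supportedInBall.absC {S : Set G} {R : ℕ} {f : G →₀ ℂ} (hf : supportedInBall S R f) :
    supportedInBall S R (absC f) := by
  rwa [supportedInBall, support_absC]

lemma l21Norm_conv_le (f ϕ : G →₀ ℂ) : l21Norm H (conv f ϕ) ≤ l1Norm f * l21Norm H ϕ := by
  refine (l21Norm_conv_le_l2Norm_quasiReg f ϕ).trans ((l2Norm_quasiReg_le _ _).trans_eq ?_)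
  rw [l1Norm_absC, l21Norm_eq_l2Norm_mapDomain_absC]

lemma filter_mapDomain_mul_left {M : Type*} [AddCommMonoid M] (z : G) (g : G →₀ M)
    (q : G ⧸ H) :
    (Finsupp.mapDomain (z * ·) g).filter (π · = q)
      = Finsupp.mapDomain (z * ·) (g.filter (π · = z⁻¹ • q)) := by
  ext x
  have hfiber : π (z⁻¹ * x) = z⁻¹ • q ↔ π x = q := by
    rw [show π (z⁻¹ * x) = z⁻¹ • π x from rfl, smul_left_cancel_iff]
  simp only [Finsupp.filter_apply, mapDomain_mul_left_apply, hfiber]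

lemma filter_conv (f ξ : G →₀ ℂ) (q : G ⧸ H) :
    (conv f ξ).filter (π · = q)
      = ∑ z ∈ f.support, f z • Finsupp.mapDomain (z * ·) (ξ.filter (π · = z⁻¹ • q)) := by
  simp only [conv, Finsupp.sum, Finsupp.filter_sum, Finsupp.filter_smul,
    filter_mapDomain_mul_left]

lemma l2Norm_filter_conv_le (f ξ : G →₀ ℂ) (q : G ⧸ H) :
    l2Norm ((conv f ξ).filter (π · = q))
      ≤ ∑ z ∈ f.support, ‖f z‖ * l2Norm (ξ.filter (π · = z⁻¹ • q)) := by
  rw [filter_conv]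
  refine (l2Norm_sum_le _ _).trans_eq (sum_congr rfl fun z _ => ?_)
  rw [l2Norm_smul, l2Norm_mapDomain_of_injective (mul_right_injective z)]

variable (H) in
noncomputable def fiberL2 (ξ : G →₀ ℂ) : G ⧸ H →₀ ℂ :=
  Finsupp.onFinset (ξ.support.image π) (fun q => (l2Norm (ξ.filter (π · = q)) : ℂ))
    fun q hq => by
      by_contra hq'
      refine hq ?_
      rw [(Finsupp.filter_eq_zero_iff _ _).mpr fun x hx => ?_]
      · simp [l2Norm]
      · exact Finsupp.notMem_support_iff.mp fun hx' => hq' (mem_image.mpr ⟨x, hx', hx⟩)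

lemma norm_fiberL2_apply (ξ : G →₀ ℂ) (q : G ⧸ H) :
    ‖fiberL2 H ξ q‖ = l2Norm (ξ.filter (π · = q)) := by
  rw [fiberL2, Finsupp.onFinset_apply, Complex.norm_real, Real.norm_of_nonneg (l2Norm_nonneg _)]

lemma fiberL2_nonneg (ξ : G →₀ ℂ) : 0 ≤ fiberL2 H ξ := fun _ =>
  Complex.zero_le_real.mpr (l2Norm_nonneg _)

lemma l2Norm_fiberL2 (ξ : G →₀ ℂ) : l2Norm (fiberL2 H ξ) = l2Norm ξ := by
  have hs : (fiberL2 H ξ).support ⊆ ξ.support.image π := Finsupp.support_onFinset_subset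
  rw [l2Norm_eq_sqrt_sum hs, ← Real.sqrt_sq (l2Norm_nonneg ξ), sq_l2Norm_eq_sum_fiber π]
  simp only [norm_fiberL2_apply]

lemma norm_quasiReg_fiberL2_apply {f : G →₀ ℂ} (hf : 0 ≤ f) (ξ : G →₀ ℂ) (q : G ⧸ H) :
    ‖quasiReg H f (fiberL2 H ξ) q‖
      = ∑ z ∈ f.support, ‖f z‖ * l2Norm (ξ.filter (π · = z⁻¹ • q)) := by
  rw [quasiReg_apply, norm_sum_of_nonneg fun z _ => mul_nonneg (hf z) (fiberL2_nonneg ξ _)]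
  simp only [norm_mul, norm_fiberL2_apply]

lemma l2Norm_conv_le_l2Norm_quasiReg_fiberL2 {f : G →₀ ℂ} (hf : 0 ≤ f) (ξ : G →₀ ℂ) :
    l2Norm (conv f ξ) ≤ l2Norm (quasiReg H f (fiberL2 H ξ)) :=
  l2Norm_le_of_fiber_le π fun q =>
    (l2Norm_filter_conv_le f ξ q).trans_eq (norm_quasiReg_fiberL2_apply hf ξ q).symm

end Group

section OperatorNorm

variable {𝕜 V W : Type*} {N : V → ℝ} {M : W → ℝ} {T : V → W}

-- `regOpNorm`, `quasiRegOpNorm` and `hybridOpNorm` are all suprema of this shape.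
lemma sSup_le_of_le_mul {b : ℝ} (hb : 0 ≤ b) (h : ∀ v, M (T v) ≤ b * N v) :
    sSup {c | ∃ v, N v ≤ 1 ∧ c = M (T v)} ≤ b :=
  Real.sSup_le (by rintro _ ⟨v, hv, rfl⟩; exact (h v).trans (mul_le_of_le_one_right hb hv)) hb

lemma sSup_nonneg_of_nonneg (hM : ∀ w, 0 ≤ M w) : 0 ≤ sSup {c | ∃ v, N v ≤ 1 ∧ c = M (T v)} :=
  Real.sSup_nonneg (by rintro _ ⟨v, -, rfl⟩; exact hM _)

lemma le_sSup_mul [RCLike 𝕜] [AddCommMonoid V] [Module 𝕜 V] [AddCommMonoid W] [Module 𝕜 W]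
    (hN : ∀ (c : 𝕜) v, N (c • v) = ‖c‖ * N v)
    (hM : ∀ (c : 𝕜) w, M (c • w) = ‖c‖ * M w) (hT : ∀ (c : 𝕜) v, T (c • v) = c • T v)
    (hN0 : ∀ v, 0 ≤ N v) {K : ℝ} (hK : ∀ v, M (T v) ≤ K * N v) (v : V) :
    M (T v) ≤ sSup {c | ∃ v, N v ≤ 1 ∧ c = M (T v)} * N v := by
  rcases (hN0 v).eq_or_lt with hv | hv
  · simpa [← hv] using hK v
  have hbdd : BddAbove {c | ∃ v, N v ≤ 1 ∧ c = M (T v)} := by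
    refine ⟨|K|, ?_⟩
    rintro _ ⟨w, hw, rfl⟩
    calc M (T w) ≤ K * N w := hK w
      _ ≤ |K| * N w := mul_le_mul_of_nonneg_right (le_abs_self K) (hN0 w)
      _ ≤ |K| := mul_le_of_le_one_right (abs_nonneg K) hw
  set c : 𝕜 := RCLike.ofReal (N v)⁻¹
  have hc : ‖c‖ = (N v)⁻¹ := by simp [c, hv.le]
  have hle := le_csSup hbdd ⟨c • v, by rw [hN, hc, inv_mul_cancel₀ hv.ne'], rfl⟩
  rw [hT, hM, hc, inv_mul_le_iff₀ hv, mul_comm] at hle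
  exact hle

end OperatorNorm

section OperatorNormGroup

variable {G : Type*} [Group G] {H : Subgroup G}

local notation "π" => (QuotientGroup.mk : G → G ⧸ H)

lemma quasiRegOpNorm_nonneg (f : G →₀ ℂ) : 0 ≤ quasiRegOpNorm H f :=
  sSup_nonneg_of_nonneg l2Norm_nonneg

lemma hybridOpNorm_nonneg (f : G →₀ ℂ) : 0 ≤ hybridOpNorm H f :=
  sSup_nonneg_of_nonneg (l21Norm_nonneg (H := H))

lemma le_quasiRegOpNorm (f : G →₀ ℂ) (ξ : G ⧸ H →₀ ℂ) :
    l2Norm (quasiReg H f ξ) ≤ quasiRegOpNorm H f * l2Norm ξ :=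
  le_sSup_mul (𝕜 := ℂ) l2Norm_smul l2Norm_smul (quasiReg_smul f) l2Norm_nonneg
    (l2Norm_quasiReg_le f) ξ

lemma le_hybridOpNorm (f ϕ : G →₀ ℂ) :
    l21Norm H (conv f ϕ) ≤ hybridOpNorm H f * l21Norm H ϕ :=
  le_sSup_mul (𝕜 := ℂ) l21Norm_smul l21Norm_smul (conv_smul f) l21Norm_nonneg
    (l21Norm_conv_le f) ϕ

variable (H) in
noncomputable def cosetRepEmbedding : G ⧸ H ↪ G := ⟨Quotient.out, Quotient.out_injective⟩

lemma mapDomain_mk_embDomain_cosetRep {M : Type*} [AddCommMonoid M] (v : G ⧸ H →₀ M) :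
    Finsupp.mapDomain π (Finsupp.embDomain (cosetRepEmbedding H) v) = v := by
  rw [Finsupp.embDomain_eq_mapDomain, ← Finsupp.mapDomain_comp]
  convert Finsupp.mapDomain_id
  exact funext QuotientGroup.out_eq'

lemma l21Norm_embDomain_cosetRep (η : G ⧸ H →₀ ℂ) :
    l21Norm H (Finsupp.embDomain (cosetRepEmbedding H) η) = l2Norm η := by
  rw [l21Norm, ← Finsupp.embDomain_mapRange, mapDomain_mk_embDomain_cosetRep]
  exact l2Norm_congr_norm fun _ => by simp

lemma quasiRegOpNorm_le_hybridOpNorm (f : G →₀ ℂ) : quasiRegOpNorm H f ≤ hybridOpNorm H f := by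
  refine sSup_le_of_le_mul (hybridOpNorm_nonneg f) fun η => ?_
  set ϕ := Finsupp.embDomain (cosetRepEmbedding H) η
  calc l2Norm (quasiReg H f η) = l2Norm (Finsupp.mapDomain π (conv f ϕ)) := by
        rw [mapDomain_conv, mapDomain_mk_embDomain_cosetRep]
    _ ≤ l21Norm H (conv f ϕ) := l2Norm_mapDomain_le_l21Norm _
    _ ≤ hybridOpNorm H f * l21Norm H ϕ := le_hybridOpNorm f ϕ
    _ = hybridOpNorm H f * l2Norm η := by rw [l21Norm_embDomain_cosetRep]

variable (H) in
lemma regOpNorm_le_quasiRegOpNorm {f : G →₀ ℂ} (hf : 0 ≤ f) :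
    regOpNorm f ≤ quasiRegOpNorm H f := by
  refine sSup_le_of_le_mul (quasiRegOpNorm_nonneg f) fun ξ => ?_
  calc l2Norm (conv f ξ) ≤ l2Norm (quasiReg H f (fiberL2 H ξ)) :=
        l2Norm_conv_le_l2Norm_quasiReg_fiberL2 hf ξ
    _ ≤ quasiRegOpNorm H f * l2Norm (fiberL2 H ξ) := le_quasiRegOpNorm f _
    _ = quasiRegOpNorm H f * l2Norm ξ := by rw [l2Norm_fiberL2]

lemma l21Norm_conv_le_quasiRegOpNorm_absC (f ϕ : G →₀ ℂ) :
    l21Norm H (conv f ϕ) ≤ quasiRegOpNorm H (absC f) * l21Norm H ϕ := by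
  refine (l21Norm_conv_le_l2Norm_quasiReg f ϕ).trans ((le_quasiRegOpNorm _ _).trans_eq ?_)
  rw [← l21Norm_eq_l2Norm_mapDomain_absC]

lemma hybridOpNorm_le_quasiRegOpNorm_absC (f : G →₀ ℂ) :
    hybridOpNorm H f ≤ quasiRegOpNorm H (absC f) :=
  sSup_le_of_le_mul (quasiRegOpNorm_nonneg _) (l21Norm_conv_le_quasiRegOpNorm_absC f)

lemma regOpNorm_eq_hybridOpNorm_of_nonneg {f : G →₀ ℂ}
    (hwc : quasiRegOpNorm H f ≤ regOpNorm f) (hf : 0 ≤ f) : regOpNorm f = hybridOpNorm H f :=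
  le_antisymm ((regOpNorm_le_quasiRegOpNorm H hf).trans (quasiRegOpNorm_le_hybridOpNorm f))
    ((hybridOpNorm_le_quasiRegOpNorm_absC f).trans (by rwa [absC_eq_self hf]))

lemma pairRD_of_groupRD {S : Set G} (hwc : ∀ f : G →₀ ℂ, quasiRegOpNorm H f ≤ regOpNorm f)
    (hG : GroupRD S) : PairRD S H := by
  obtain ⟨C, D, hC, hRD⟩ := hG
  refine ⟨C, D, hC, fun R f ϕ hf => ?_⟩
  set K := C * ((R : ℝ) + 1) ^ D
  have hK : 0 ≤ K := by positivity
  have hreg : regOpNorm (absC f) ≤ K * l2Norm f :=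
    sSup_le_of_le_mul (mul_nonneg hK (l2Norm_nonneg f)) fun ξ => by
      simpa only [l2Norm_absC] using hRD R (absC f) ξ hf.absC
  calc l21Norm H (conv f ϕ) ≤ quasiRegOpNorm H (absC f) * l21Norm H ϕ :=
        l21Norm_conv_le_quasiRegOpNorm_absC f ϕ
    _ ≤ K * l2Norm f * l21Norm H ϕ :=
        mul_le_mul_of_nonneg_right ((hwc _).trans hreg) (l21Norm_nonneg ϕ)
    _ ≤ K * l21Norm H f * l21Norm H ϕ :=
        mul_le_mul_of_nonneg_right (mul_le_mul_of_nonneg_left (l2Norm_le_l21Norm f) hK)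
          (l21Norm_nonneg ϕ)

end OperatorNormGroup

theorem statement4_general {G : Type*} [Group G] (S : Set G) (H : Subgroup G)
    (hwc : ∀ f : G →₀ ℂ, quasiRegOpNorm H f ≤ regOpNorm f) :
    (∀ f : G →₀ ℝ, (∀ x, 0 ≤ f x) → regOpNorm (toC f) = hybridOpNorm H (toC f)) ∧
    (GroupRD S → PairRD S H) :=
  ⟨fun _ hf => regOpNorm_eq_hybridOpNorm_of_nonneg (hwc _) (toC_nonneg hf), pairRD_of_groupRD hwc⟩

/-- if the quasi-regular representation is weakly contained in the
regular one, then `‖f‖_* = ‖f‖_h` on nonnegative functions, and rapid decay of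
`G` implies rapid decay of the pair `(G,H)`. -/
theorem statement4 {G : Type*} [Group G] (S : Set G) (hfin : S.Finite)
    (hsym : ∀ s ∈ S, s⁻¹ ∈ S) (hgen : Subgroup.closure S = ⊤) (H : Subgroup G)
    (hwc : ∀ f : G →₀ ℂ, quasiRegOpNorm H f ≤ regOpNorm f) :
    (∀ f : G →₀ ℝ, (∀ x, 0 ≤ f x) → regOpNorm (toC f) = hybridOpNorm H (toC f)) ∧
    (GroupRD S → PairRD S H) :=
  statement4_general S H hwc
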